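/- Let τ ∈ ℂ with Im τ > 0, −1/2 < Re τ ≤ 1/2 and |τ| > 1, and let Γ_τ = {m + n·τ : m, n ∈ ℤ}. Suppose I(z) = a·conj(z) + b with a, b ∈ ℂ is a lift of an antiholomorphic involution of the torus ℂ/Γ_τ. Then a ∈ {1, −1}. -/

import Mathlib

/-!
Putting `z = 0` and `ω = 1` in the periodicity condition gives `a = I 1 - I 0 ∈ Γ_τ`.
The involution condition says `(|a|² - 1) z + (a b̄ + b) ∈ Γ_τ` for every `z`; since the
lattice is not all of `ℂ`, this forces `|a| = 1`. Finally, for `τ` in the fundamental domain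
every lattice vector `m + nτ` with `n ≠ 0` has length `> 1`, so the unit lattice vectors are `±1`.
-/

open Complex ComplexConjugate

def lattice (τ : ℂ) : Set ℂ := {z | ∃ m n : ℤ, z = m + n * τ}

namespace lattice

variable {τ : ℂ}

lemma one_mem : (1 : ℂ) ∈ lattice τ := ⟨1, 0, by push_cast; ring⟩

lemma sub_mem {x y : ℂ} (hx : x ∈ lattice τ) (hy : y ∈ lattice τ) : x - y ∈ lattice τ := by
  obtain ⟨m₁, n₁, rfl⟩ := hx
  obtain ⟨m₂, n₂, rfl⟩ := hy
  exact ⟨m₁ - m₂, n₁ - n₂, by push_cast; ring⟩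

lemma half_notMem (hτ : 0 < τ.im) : (1 / 2 : ℂ) ∉ lattice τ := by
  rintro ⟨m, n, h⟩
  have him : (n : ℝ) * τ.im = 0 := by simpa using (congrArg im h).symm
  have hn : n = 0 := by exact_mod_cast (mul_eq_zero.mp him).resolve_right hτ.ne'
  subst hn
  have hm : (2 * m : ℝ) = 1 := by
    have := congrArg re h
    norm_num at this
    linarith
  have : 2 * m = 1 := by exact_mod_cast hm
  omega

lemma eq_zero_of_forall_mul_mem (hτ : 0 < τ.im) {k : ℂ} (h : ∀ z, k * z ∈ lattice τ) :
    k = 0 := by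
  by_contra hk
  exact half_notMem hτ (by simpa [mul_div_cancel₀ _ hk] using h ((1 / 2) / k))

end lattice

lemma Int.one_le_sq_sub_abs_mul_add_sq {m n : ℤ} (hn : n ≠ 0) : 1 ≤ m ^ 2 - |m * n| + n ^ 2 := by
  have hn' : 0 < |n| := abs_pos.mpr hn
  rw [abs_mul, ← sq_abs m, ← sq_abs n]
  nlinarith [sq_nonneg (2 * |m| - |n|)]

section FundamentalDomain

variable {τ : ℂ} (hre : |τ.re| ≤ 1 / 2) (habs : 1 < normSq τ)
include hre habs

lemma one_lt_normSq_intCast_add_mul (m : ℤ) {n : ℤ} (hn : n ≠ 0) :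
    1 < normSq (m + n * τ) := by
  have hmn : (1 : ℝ) ≤ m ^ 2 - |(m : ℝ) * n| + n ^ 2 := by
    exact_mod_cast Int.one_le_sq_sub_abs_mul_add_sq hn
  have hn2 : (1 : ℝ) ≤ n ^ 2 := by
    have : (1 : ℤ) ≤ n ^ 2 := by nlinarith [Int.one_le_abs hn, sq_abs n]
    exact_mod_cast this
  have hcross : -|(m : ℝ) * n| ≤ 2 * (m * n) * τ.re := by
    have : |(m : ℝ) * n * τ.re| ≤ |(m : ℝ) * n| * (1 / 2) := by
      rw [abs_mul]
      gcongr
    linarith [neg_abs_le ((m : ℝ) * n * τ.re)]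
  have hexpand : normSq (m + n * τ) = m ^ 2 + 2 * (m * n) * τ.re + n ^ 2 * normSq τ := by
    simp only [normSq_apply, add_re, add_im, mul_re, mul_im, intCast_re, intCast_im]
    ring
  rw [hexpand]
  nlinarith

lemma eq_one_or_eq_neg_one_of_mem_lattice {a : ℂ} (ha : a ∈ lattice τ) (h : normSq a = 1) :
    a = 1 ∨ a = -1 := by
  obtain ⟨m, n, rfl⟩ := ha
  obtain rfl : n = 0 := by
    by_contra hn
    exact (one_lt_normSq_intCast_add_mul hre habs m hn).ne' h
  rw [Int.cast_zero, zero_mul, add_zero, normSq_intCast] at h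
  have : m * m = 1 := by exact_mod_cast h
  rcases mul_self_eq_one_iff.mp this with rfl | rfl <;> simp

end FundamentalDomain

section AffineInvolution

variable {τ a b : ℂ} {I : ℂ → ℂ} (hI : ∀ z, I z = a * conj z + b)
include hI

lemma mem_lattice_of_periodic (hper : ∀ z, ∀ ω ∈ lattice τ, I (z + ω) - I z ∈ lattice τ) :
    a ∈ lattice τ := by
  simpa [hI] using hper 0 1 lattice.one_mem

lemma normSq_eq_one_of_involutive (hτ : 0 < τ.im) (hinv : ∀ z, I (I z) - z ∈ lattice τ) :
    normSq a = 1 := by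
  have hmul : ∀ z, (a * conj a - 1) * z ∈ lattice τ := fun z ↦ by
    convert lattice.sub_mem (hinv z) (hinv 0) using 1
    simp only [hI, map_add, map_mul, conj_conj, map_zero]
    ring
  have := lattice.eq_zero_of_forall_mul_mem hτ hmul
  rw [mul_conj, sub_eq_zero] at this
  exact_mod_cast this

end AffineInvolution

theorem stmt_4 (τ : ℂ) (hτ : 0 < τ.im)
    (hre : -(1/2) < τ.re ∧ τ.re ≤ 1/2) (habs : 1 < ‖τ‖)
    (Γ : Set ℂ) (hΓ : Γ = {z : ℂ | ∃ m n : ℤ, z = m + n * τ})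
    (a b : ℂ)
    (I : ℂ → ℂ) (hI : ∀ z : ℂ, I z = a * starRingEnd ℂ z + b)
    (hper : ∀ z : ℂ, ∀ ω ∈ Γ, I (z + ω) - I z ∈ Γ)
    (hinv : ∀ z : ℂ, I (I z) - z ∈ Γ) :
    a = 1 ∨ a = -1 := by
  change Γ = lattice τ at hΓ
  subst hΓ
  have hre' : |τ.re| ≤ 1 / 2 := abs_le.mpr ⟨hre.1.le, hre.2⟩
  have habs' : 1 < normSq τ := by
    rw [← Complex.sq_norm]
    nlinarith [norm_nonneg τ]
  exact eq_one_or_eq_neg_one_of_mem_lattice hre' habs' (mem_lattice_of_periodic hI hper)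
    (normSq_eq_one_of_involutive hI hτ hinv)
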